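/- Consider M = ℝ/(2πLℤ) and the operator L̂f(u,x) = ∑_{k=1}^n (e_k(x) ∂_{u_k} f − a_k u_k e_k'(x) ∂_x f) on C_c^∞(ℝⁿ × M), where e_k are eigenfunctions of d²/dx² with eigenvalue −k²/L² forming an orthonormal system, a_k ≥ 0, and μ̂ = μ ⊗ κ with μ the Gaussian measure proportional to exp(−(1/(2L²))∑_k a_k k² u_k²) and κ the uniform probability measure on M. Then L̂ is antisymmetric in L²(μ̂): ∫ f·L̂g dμ̂ = −∫ (L̂f)·g dμ̂ for all f, g ∈ C_c^∞(ℝⁿ × M). -/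

import Mathlib

open MeasureTheory Real ProbabilityTheory

noncomputable def Phi {n : ℕ} (c : Fin n → ℝ) (u : Fin n → ℝ) : ℝ :=
  (1/2) * ∑ k, c k * u k ^ 2

noncomputable def gaussMeasure {n : ℕ} (c : Fin n → ℝ) : Measure (Fin n → ℝ) :=
  (∫⁻ u, ENNReal.ofReal (Real.exp (-Phi c u)))⁻¹ •
    (volume.withDensity fun u => ENNReal.ofReal (Real.exp (-Phi c u)))


/-- The lifted generator `L̂h(u,x) = ∑_k (e_k(x) ∂_{u_k}h − a_k u_k e_k'(x) ∂_x h)`. -/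
noncomputable def Lhat {n : ℕ} (a : Fin n → ℝ) (e : Fin n → ℝ → ℝ)
    (h : (Fin n → ℝ) → ℝ → ℝ) (u : Fin n → ℝ) (x : ℝ) : ℝ :=
  ∑ k, (e k x * fderiv ℝ (fun v => h v x) u (Pi.single k 1)
        - a k * u k * deriv (e k) x * deriv (h u) x)


lemma integral_fderiv_apply_eq_zero {n : ℕ} {F : (Fin n → ℝ) → ℝ}
    (hF : ContDiff ℝ 1 F) (hsupp : HasCompactSupport F) (v : Fin n → ℝ) :
    ∫ u, fderiv ℝ F u v = 0 := by
  obtain ⟨C, hC⟩ := (hF.continuous_fderiv one_ne_zero).bounded_above_of_compact_support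
    (hsupp.fderiv (𝕜 := ℝ))
  set K₁ : Set (Fin n → ℝ) := Metric.cthickening (‖v‖ + 1) (tsupport F) with hK₁
  have hK₁c : IsCompact K₁ := hsupp.cthickening
  have hmeas : MeasurableSet K₁ := hK₁c.isClosed.measurableSet
  set bound : (Fin n → ℝ) → ℝ := K₁.indicator (fun _ => C * ‖v‖) with hbound
  have hbint : Integrable bound := by
    rw [hbound, integrable_indicator_iff hmeas]
    exact integrableOn_const hK₁c.measure_lt_top.ne
  have hCnn : 0 ≤ C := le_trans (norm_nonneg _) (hC 0)
  have key : ∀ t : ℝ, ∀ u, ‖fderiv ℝ F (u + t • v) v‖ ≤ C * ‖v‖ := by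
    intro t u
    calc ‖fderiv ℝ F (u + t • v) v‖ ≤ ‖fderiv ℝ F (u + t • v)‖ * ‖v‖ :=
          (fderiv ℝ F (u + t • v)).le_opNorm v
      _ ≤ C * ‖v‖ := by
          have := hC (u + t • v)
          nlinarith [norm_nonneg (fderiv ℝ F (u + t • v)), norm_nonneg v]
  have hcont' : Continuous fun u => fderiv ℝ F u v :=
    (ContinuousLinearMap.apply ℝ ℝ v).continuous.comp (hF.continuous_fderiv one_ne_zero)
  have h := hasDerivAt_integral_of_dominated_loc_of_deriv_le
    (F := fun t (u : Fin n → ℝ) => F (u + t • v))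
    (F' := fun t u => fderiv ℝ F (u + t • v) v) (x₀ := (0:ℝ)) (s := Metric.ball (0:ℝ) 1)
    (bound := bound) (Metric.ball_mem_nhds _ one_pos)
    (Filter.Eventually.of_forall fun t =>
      ((hF.continuous.comp (continuous_add_right (t • v))).aestronglyMeasurable))
    (by simpa using hF.continuous.integrable_of_hasCompactSupport hsupp)
    (by
      apply Continuous.aestronglyMeasurable
      exact hcont'.comp (continuous_id.add continuous_const))
    (Filter.Eventually.of_forall fun u => by
      intro t ht
      by_cases h0 : fderiv ℝ F (u + t • v) = 0
      · simp only [h0, ContinuousLinearMap.zero_apply, norm_zero]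
        exact Set.indicator_nonneg (fun _ _ => mul_nonneg hCnn (norm_nonneg _)) u
      · have hmem : u + t • v ∈ tsupport F :=
          support_fderiv_subset ℝ (f := F) h0
        have hu : u ∈ K₁ := by
          apply Metric.mem_cthickening_of_dist_le u (u + t • v) _ _ hmem
          rw [dist_self_add_right]
          have : ‖t • v‖ = |t| * ‖v‖ := by rw [norm_smul, Real.norm_eq_abs]
          rw [this]
          have ht' : |t| ≤ 1 := by
            have := Metric.mem_ball.1 ht
            simp only [Real.dist_eq, sub_zero] at this
            linarith [le_of_lt this]
          nlinarith [norm_nonneg v, abs_nonneg t]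
        rw [hbound, Set.indicator_of_mem hu]
        exact key t u)
    hbint
    (Filter.Eventually.of_forall fun u => by
      intro t ht
      have hpath : HasDerivAt (fun s : ℝ => u + s • v) v t := by
        simpa using (((hasDerivAt_id t).smul_const v).const_add u)
      exact ((hF.differentiable one_ne_zero _).hasFDerivAt.comp_hasDerivAt t hpath))
  have h2 := h.2
  rw [show (fun t : ℝ => ∫ u, F (u + t • v)) = (fun _ : ℝ => ∫ u, F u) from
    funext fun t => integral_add_right_eq_self F (t • v)] at h2
  have := h2.unique (hasDerivAt_const 0 _)
  simpa using this



lemma contDiff_Phi {n : ℕ} (c : Fin n → ℝ) : ContDiff ℝ (⊤ : ℕ∞) (Phi c) := by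
  unfold Phi
  exact (contDiff_const (c := (1/2:ℝ))).mul (ContDiff.sum fun k _ =>
    (contDiff_const (c := c k)).mul
      ((ContinuousLinearMap.proj k : (Fin n → ℝ) →L[ℝ] ℝ).contDiff.pow 2))

lemma hasFDerivAt_Phi {n : ℕ} (c : Fin n → ℝ) (u : Fin n → ℝ) :
    HasFDerivAt (Phi c)
      (∑ j, (c j * u j) • (ContinuousLinearMap.proj j : (Fin n → ℝ) →L[ℝ] ℝ)) u := by
  have h : ∀ j : Fin n, HasFDerivAt (fun v : Fin n → ℝ => c j * v j ^ 2)
      ((c j * (2 * u j)) • (ContinuousLinearMap.proj j : (Fin n → ℝ) →L[ℝ] ℝ)) u := by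
    intro j
    have h1 : HasFDerivAt (fun v : Fin n → ℝ => v j)
        (ContinuousLinearMap.proj j : (Fin n → ℝ) →L[ℝ] ℝ) u :=
      (ContinuousLinearMap.proj j : (Fin n → ℝ) →L[ℝ] ℝ).hasFDerivAt
    have h2 := (h1.fun_mul h1).const_mul (c j)
    have heq : (fun v : Fin n → ℝ => c j * v j ^ 2) = fun v => c j * (v j * v j) := by
      funext v; ring
    rw [heq]
    refine h2.congr_fderiv ?_
    ext v
    simp
    ring
  have hsum := HasFDerivAt.fun_sum (fun j (_ : j ∈ Finset.univ) => h j)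
  have h3 := hsum.const_mul (1/2 : ℝ)
  have heq : Phi c = fun u : Fin n → ℝ => (1/2 : ℝ) * ∑ j, c j * u j ^ 2 := rfl
  rw [heq]
  refine h3.congr_fderiv ?_
  ext v
  simp [Finset.mul_sum]
  congr 1
  funext j
  ring

lemma Phi_deriv_single {n : ℕ} (c : Fin n → ℝ) (u : Fin n → ℝ) (k : Fin n) :
    (∑ j, (c j * u j) • (ContinuousLinearMap.proj j : (Fin n → ℝ) →L[ℝ] ℝ))
      (Pi.single k 1) = c k * u k := by
  simp only [ContinuousLinearMap.coe_sum', Finset.sum_apply, ContinuousLinearMap.coe_smul',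
    Pi.smul_apply, ContinuousLinearMap.proj_apply, smul_eq_mul, Pi.single_apply]
  rw [Finset.sum_eq_single k] <;> simp +contextual


variable {n : ℕ} {h : (Fin n → ℝ) → ℝ → ℝ}

lemma hasFDerivAt_partial_u (hh : ContDiff ℝ (⊤ : ℕ∞) (fun p : (Fin n → ℝ) × ℝ => h p.1 p.2))
    (u : Fin n → ℝ) (x : ℝ) :
    HasFDerivAt (fun v => h v x)
      ((fderiv ℝ (fun p : (Fin n → ℝ) × ℝ => h p.1 p.2) (u, x)).comp
        (ContinuousLinearMap.inl ℝ (Fin n → ℝ) ℝ)) u := by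
  have hD := (hh.differentiable (by simp) (u, x)).hasFDerivAt
  have hpath := hasFDerivAt_prodMk_left (𝕜 := ℝ) u x
  exact hD.comp u hpath

lemma fderiv_partial_u_eq (hh : ContDiff ℝ (⊤ : ℕ∞) (fun p : (Fin n → ℝ) × ℝ => h p.1 p.2))
    (u : Fin n → ℝ) (x : ℝ) (k : Fin n) :
    fderiv ℝ (fun v => h v x) u (Pi.single k 1)
      = fderiv ℝ (fun p : (Fin n → ℝ) × ℝ => h p.1 p.2) (u, x) (Pi.single k 1, 0) := by
  rw [(hasFDerivAt_partial_u hh u x).fderiv]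
  simp

lemma hasDerivAt_partial_x (hh : ContDiff ℝ (⊤ : ℕ∞) (fun p : (Fin n → ℝ) × ℝ => h p.1 p.2))
    (u : Fin n → ℝ) (x : ℝ) :
    HasDerivAt (h u)
      (fderiv ℝ (fun p : (Fin n → ℝ) × ℝ => h p.1 p.2) (u, x) (0, 1)) x := by
  have hD := (hh.differentiable (by simp) (u, x)).hasFDerivAt
  have hpath : HasDerivAt (fun t : ℝ => ((u, t) : (Fin n → ℝ) × ℝ)) (0, 1) x := by
    have := ((hasFDerivAt_prodMk_right (𝕜 := ℝ) u x)).hasDerivAt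
    simpa using this
  exact hD.comp_hasDerivAt x hpath

lemma deriv_partial_x_eq (hh : ContDiff ℝ (⊤ : ℕ∞) (fun p : (Fin n → ℝ) × ℝ => h p.1 p.2))
    (u : Fin n → ℝ) (x : ℝ) :
    deriv (h u) x = fderiv ℝ (fun p : (Fin n → ℝ) × ℝ => h p.1 p.2) (u, x) (0, 1) :=
  (hasDerivAt_partial_x hh u x).deriv

lemma continuous_fderiv_apply (hh : ContDiff ℝ (⊤ : ℕ∞) (fun p : (Fin n → ℝ) × ℝ => h p.1 p.2))
    (v : (Fin n → ℝ) × ℝ) :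
    Continuous fun p : (Fin n → ℝ) × ℝ =>
      fderiv ℝ (fun q : (Fin n → ℝ) × ℝ => h q.1 q.2) p v :=
  (ContinuousLinearMap.apply ℝ ℝ v).continuous.comp (hh.continuous_fderiv (by simp))



variable {f g : (Fin n → ℝ) → ℝ → ℝ}

lemma fderiv_partial_vanish {K : Set (Fin n → ℝ)} (hKc : IsClosed K)
    (h0 : ∀ u ∉ K, ∀ x, h u x = 0) {u : Fin n → ℝ} (hu : u ∉ K) (x : ℝ) (v : Fin n → ℝ) :
    fderiv ℝ (fun w => h w x) u v = 0 := by
  have hev : (fun w => h w x) =ᶠ[nhds u] fun _ => (0 : ℝ) :=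
    Filter.eventually_of_mem (hKc.isOpen_compl.mem_nhds hu) (fun w hw => h0 w hw x)
  rw [hev.fderiv_eq, fderiv_fun_const]
  simp

lemma deriv_partial_vanish {K : Set (Fin n → ℝ)}
    (h0 : ∀ u ∉ K, ∀ x, h u x = 0) {u : Fin n → ℝ} (hu : u ∉ K) (x : ℝ) :
    deriv (h u) x = 0 := by
  rw [show h u = fun _ => (0 : ℝ) from funext (h0 u hu)]
  simp

lemma Lhat_vanish {a : Fin n → ℝ} {e : Fin n → ℝ → ℝ} {K : Set (Fin n → ℝ)} (hKc : IsClosed K)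
    (h0 : ∀ u ∉ K, ∀ x, h u x = 0) {u : Fin n → ℝ} (hu : u ∉ K) (x : ℝ) :
    Lhat a e h u x = 0 := by
  unfold Lhat
  apply Finset.sum_eq_zero
  intro k _
  rw [fderiv_partial_vanish hKc h0 hu x, deriv_partial_vanish h0 hu x]
  ring

-- continuity of Lhat jointly
lemma continuous_Lhat (a : Fin n → ℝ) (e : Fin n → ℝ → ℝ) (he : ∀ k, ContDiff ℝ (⊤ : ℕ∞) (e k))
    (hh : ContDiff ℝ (⊤ : ℕ∞) (fun p : (Fin n → ℝ) × ℝ => h p.1 p.2)) :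
    Continuous fun p : (Fin n → ℝ) × ℝ => Lhat a e h p.1 p.2 := by
  unfold Lhat
  apply continuous_finset_sum
  intro k _
  have h1 : (fun p : (Fin n → ℝ) × ℝ => fderiv ℝ (fun v => h v p.2) p.1 (Pi.single k 1))
      = fun p => fderiv ℝ (fun q : (Fin n → ℝ) × ℝ => h q.1 q.2) p (Pi.single k 1, 0) := by
    funext p
    exact fderiv_partial_u_eq hh p.1 p.2 k
  have h2 : (fun p : (Fin n → ℝ) × ℝ => deriv (h p.1) p.2)
      = fun p => fderiv ℝ (fun q : (Fin n → ℝ) × ℝ => h q.1 q.2) p (0, 1) := by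
    funext p
    exact deriv_partial_x_eq hh p.1 p.2
  have heq : (fun p : (Fin n → ℝ) × ℝ => e k p.2 * fderiv ℝ (fun v => h v p.2) p.1 (Pi.single k 1)
        - a k * p.1 k * deriv (e k) p.2 * deriv (h p.1) p.2)
      = fun p => e k p.2 * fderiv ℝ (fun q : (Fin n → ℝ) × ℝ => h q.1 q.2) p (Pi.single k 1, 0)
        - a k * p.1 k * deriv (e k) p.2
          * fderiv ℝ (fun q : (Fin n → ℝ) × ℝ => h q.1 q.2) p (0, 1) := by
    funext p
    rw [congrFun h1 p, congrFun h2 p]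
  rw [heq]
  have hc1 : Continuous fun p : (Fin n → ℝ) × ℝ =>
      fderiv ℝ (fun q : (Fin n → ℝ) × ℝ => h q.1 q.2) p ((Pi.single k 1 : Fin n → ℝ), (0:ℝ)) :=
    (ContinuousLinearMap.apply ℝ ℝ _).continuous.comp (hh.continuous_fderiv (by simp))
  have hc2 : Continuous fun p : (Fin n → ℝ) × ℝ =>
      fderiv ℝ (fun q : (Fin n → ℝ) × ℝ => h q.1 q.2) p ((0 : Fin n → ℝ), (1:ℝ)) :=
    (ContinuousLinearMap.apply ℝ ℝ _).continuous.comp (hh.continuous_fderiv (by simp))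
  have he' : Continuous (deriv (e k)) := (he k).continuous_deriv (by simp)
  exact (((he k).continuous.comp continuous_snd).mul hc1).sub
    (((continuous_const.mul ((continuous_apply k).comp continuous_fst)).mul
      (he'.comp continuous_snd)).mul hc2)

-- product rule
lemma Lhat_mul (a : Fin n → ℝ) (e : Fin n → ℝ → ℝ)
    (hf : ContDiff ℝ (⊤ : ℕ∞) (fun p : (Fin n → ℝ) × ℝ => f p.1 p.2))
    (hg : ContDiff ℝ (⊤ : ℕ∞) (fun p : (Fin n → ℝ) × ℝ => g p.1 p.2))
    (u : Fin n → ℝ) (x : ℝ) :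
    Lhat a e (fun v y => f v y * g v y) u x
      = f u x * Lhat a e g u x + Lhat a e f u x * g u x := by
  have hfd : ∀ (w : Fin n → ℝ) (y : ℝ), DifferentiableAt ℝ (fun v => f v y) w := by
    intro w y
    exact ((hf.differentiable (by simp) (w, y)).hasFDerivAt.comp w
      (hasFDerivAt_prodMk_left (𝕜 := ℝ) w y)).differentiableAt
  have hgd : ∀ (w : Fin n → ℝ) (y : ℝ), DifferentiableAt ℝ (fun v => g v y) w := by
    intro w y
    exact ((hg.differentiable (by simp) (w, y)).hasFDerivAt.comp w
      (hasFDerivAt_prodMk_left (𝕜 := ℝ) w y)).differentiableAt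
  have hfx : ∀ (w : Fin n → ℝ) (y : ℝ), DifferentiableAt ℝ (f w) y := by
    intro w y
    exact ((hf.differentiable (by simp) (w, y)).hasFDerivAt.comp_hasDerivAt y
      (by simpa using (hasFDerivAt_prodMk_right (𝕜 := ℝ) w y).hasDerivAt)).differentiableAt
  have hgx : ∀ (w : Fin n → ℝ) (y : ℝ), DifferentiableAt ℝ (g w) y := by
    intro w y
    exact ((hg.differentiable (by simp) (w, y)).hasFDerivAt.comp_hasDerivAt y
      (by simpa using (hasFDerivAt_prodMk_right (𝕜 := ℝ) w y).hasDerivAt)).differentiableAt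
  unfold Lhat
  rw [Finset.mul_sum, Finset.sum_mul, ← Finset.sum_add_distrib]
  apply Finset.sum_congr rfl
  intro k _
  have hDm : fderiv ℝ (fun v => f v x * g v x) u (Pi.single k 1)
      = f u x * fderiv ℝ (fun v => g v x) u (Pi.single k 1)
        + g u x * fderiv ℝ (fun v => f v x) u (Pi.single k 1) := by
    rw [fderiv_fun_mul (hfd u x) (hgd u x)]
    simp
  have hdm : deriv (fun y => f u y * g u y) x
      = deriv (f u) x * g u x + f u x * deriv (g u) x := deriv_fun_mul (hfx u x) (hgx u x)
  show e k x * fderiv ℝ (fun v => f v x * g v x) u (Pi.single k 1)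
      - a k * u k * deriv (e k) x * deriv (fun y => f u y * g u y) x = _
  rw [hDm, hdm]
  ring

lemma xIBP {L : ℝ} (hL : 0 < L) (ek : ℝ → ℝ) (he : ContDiff ℝ (⊤ : ℕ∞) ek)
    (hper : Function.Periodic ek (2 * π * L))
    (lam : ℝ) (heig : deriv (deriv ek) = fun x => -lam * ek x)
    (ψ : ℝ → ℝ) (hψ : Differentiable ℝ ψ) (hψ' : Continuous (deriv ψ))
    (hψper : Function.Periodic ψ (2 * π * L)) :
    ∫ x in (0:ℝ)..(2 * π * L), deriv ek x * deriv ψ x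
      = lam * ∫ x in (0:ℝ)..(2 * π * L), ek x * ψ x := by
  set T := 2 * π * L with hT
  have hde : ContDiff ℝ (⊤ : ℕ∞) (deriv ek) := (contDiff_infty_iff_deriv.mp (he.of_le (by simp))).2
  have h1 : ∀ x ∈ Set.uIcc (0:ℝ) T, HasDerivAt (deriv ek) (deriv (deriv ek) x) x :=
    fun x _ => (hde.differentiable (by norm_num) x).hasDerivAt
  have h2 : ∀ x ∈ Set.uIcc (0:ℝ) T, HasDerivAt ψ (deriv ψ x) x :=
    fun x _ => (hψ x).hasDerivAt
  have hi1 : IntervalIntegrable (deriv (deriv ek)) volume 0 T :=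
    (hde.continuous_deriv (by norm_num)).intervalIntegrable _ _
  have hi2 : IntervalIntegrable (deriv ψ) volume 0 T := hψ'.intervalIntegrable _ _
  rw [intervalIntegral.integral_mul_deriv_eq_deriv_mul h1 h2 hi1 hi2]
  have hb1 : deriv ek T = deriv ek 0 := by
    have hfun : (fun y => ek (y + T)) = ek := funext fun y => hper y
    calc deriv ek T = deriv ek (0 + T) := by rw [zero_add]
      _ = deriv (fun y => ek (y + T)) 0 := (deriv_comp_add_const ek T 0).symm
      _ = deriv ek 0 := by rw [hfun]
  have hb2 : ψ T = ψ 0 := by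
    have := hψper 0
    simpa using this
  rw [hb1, hb2]
  have heq : (fun x => deriv (deriv ek) x * ψ x) = fun x => -(lam * (ek x * ψ x)) := by
    funext x
    rw [heig]
    ring
  rw [heq]
  rw [intervalIntegral.integral_neg, intervalIntegral.integral_const_mul]
  ring

lemma integrable_prod_helper {n : ℕ} {G : ((Fin n → ℝ) × ℝ) → ℝ} (hG : Continuous G)
    {K : Set (Fin n → ℝ)} (hK : IsCompact K) (hGs : ∀ p : (Fin n → ℝ) × ℝ, p.1 ∉ K → G p = 0)
    (T : ℝ) :
    Integrable G ((volume : Measure (Fin n → ℝ)).prod (volume.restrict (Set.Ioc 0 T))) := by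
  have hprod : (volume : Measure (Fin n → ℝ)).prod (volume.restrict (Set.Ioc 0 T))
      = ((volume : Measure ((Fin n → ℝ) × ℝ))).restrict (Set.univ ×ˢ Set.Ioc 0 T) := by
    rw [MeasureTheory.Measure.volume_eq_prod, ← Measure.prod_restrict, Measure.restrict_univ]
  rw [hprod]
  have hGind : G = (K ×ˢ (Set.univ : Set ℝ)).indicator G := by
    funext p
    by_cases hp : p.1 ∈ K
    · rw [Set.indicator_of_mem (Set.mk_mem_prod hp (Set.mem_univ _))]
    · rw [Set.indicator_of_notMem (fun hmem => hp hmem.1), hGs p hp]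
  rw [hGind, integrable_indicator_iff (hK.isClosed.measurableSet.prod MeasurableSet.univ)]
  have hset : (K ×ˢ (Set.univ : Set ℝ)) ∩ (Set.univ ×ˢ Set.Ioc 0 T) = K ×ˢ Set.Ioc 0 T := by
    rw [Set.prod_inter_prod, Set.inter_univ, Set.univ_inter]
  rw [IntegrableOn, Measure.restrict_restrict (hK.isClosed.measurableSet.prod MeasurableSet.univ),
    hset]
  exact (hG.continuousOn.integrableOn_compact (hK.prod isCompact_Icc)).mono_set
    (Set.prod_mono subset_rfl Set.Ioc_subset_Icc_self)

lemma key {n : ℕ} (L : ℝ) (hL : 0 < L) (a : Fin n → ℝ)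
    (e : Fin n → ℝ → ℝ) (he : ∀ k, ContDiff ℝ (⊤ : ℕ∞) (e k))
    (hper : ∀ k, Function.Periodic (e k) (2 * π * L))
    (heig : ∀ k : Fin n, deriv (deriv (e k))
      = fun x => -(((k.1 + 1 : ℕ) : ℝ) ^ 2 / L ^ 2) * e k x)
    (h : (Fin n → ℝ) → ℝ → ℝ)
    (hh : ContDiff ℝ (⊤ : ℕ∞) (fun p : (Fin n → ℝ) × ℝ => h p.1 p.2))
    {K : Set (Fin n → ℝ)} (hK : IsCompact K) (h0 : ∀ u ∉ K, ∀ x, h u x = 0)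
    (hhper : ∀ u, Function.Periodic (h u) (2 * π * L)) :
    ∫ u, Real.exp (-Phi (fun k => a k * ((k.1 + 1 : ℕ) : ℝ) ^ 2 / L ^ 2) u)
      * ∫ x in (0:ℝ)..(2 * π * L), Lhat a e h u x = 0 := by
  set T := 2 * π * L with hTdef
  have hT0 : (0:ℝ) ≤ T := by rw [hTdef]; positivity
  set c : Fin n → ℝ := fun k => a k * ((k.1 + 1 : ℕ) : ℝ) ^ 2 / L ^ 2 with hcdef
  have hclam : ∀ k : Fin n, a k * (((k.1 + 1 : ℕ) : ℝ) ^ 2 / L ^ 2) = c k := by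
    intro k; rw [hcdef]; ring
  -- smoothness of the weight
  have hwc : ContDiff ℝ (⊤ : ℕ∞) (fun u : Fin n → ℝ => Real.exp (-Phi c u)) :=
    (Real.contDiff_exp.of_le le_top).comp (((contDiff_Phi c).of_le (by simp)).neg)
  have hwcont : Continuous (fun u : Fin n → ℝ => Real.exp (-Phi c u)) := hwc.continuous
  have hwD : ∀ u : Fin n → ℝ, HasFDerivAt (fun v => Real.exp (-Phi c v))
      (-(Real.exp (-Phi c u) •
        ∑ j, (c j * u j) • (ContinuousLinearMap.proj j : (Fin n → ℝ) →L[ℝ] ℝ))) u := by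
    intro u
    have h2 := ((hasFDerivAt_Phi c u).neg).exp
    simpa [smul_neg, neg_smul] using h2
  -- partial derivatives of h
  have hD1eq : ∀ (k : Fin n) u x, fderiv ℝ (fun v => h v x) u (Pi.single k 1)
      = fderiv ℝ (fun p : (Fin n → ℝ) × ℝ => h p.1 p.2) (u, x) (Pi.single k 1, 0) :=
    fun k u x => fderiv_partial_u_eq hh u x k
  have hD2eq : ∀ u x, deriv (h u) x
      = fderiv ℝ (fun p : (Fin n → ℝ) × ℝ => h p.1 p.2) (u, x) (0, 1) :=
    fun u x => deriv_partial_x_eq hh u x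
  have hD1cont : ∀ k : Fin n, Continuous fun p : (Fin n → ℝ) × ℝ =>
      fderiv ℝ (fun q : (Fin n → ℝ) × ℝ => h q.1 q.2) p (Pi.single k 1, 0) :=
    fun k => continuous_fderiv_apply hh _
  have hD2cont : Continuous fun p : (Fin n → ℝ) × ℝ =>
      fderiv ℝ (fun q : (Fin n → ℝ) × ℝ => h q.1 q.2) p (0, 1) :=
    continuous_fderiv_apply hh _
  have hhcont : Continuous fun p : (Fin n → ℝ) × ℝ => h p.1 p.2 := hh.continuous
  have hD1van : ∀ (k : Fin n) u x, u ∉ K →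
      fderiv ℝ (fun p : (Fin n → ℝ) × ℝ => h p.1 p.2) (u, x) (Pi.single k 1, 0) = 0 := by
    intro k u x hu
    rw [← hD1eq k u x]
    exact fderiv_partial_vanish hK.isClosed h0 hu x _
  -- integration by parts in u
  have hIBPu : ∀ (x : ℝ) (k : Fin n),
      (∫ u : Fin n → ℝ, Real.exp (-Phi c u)
          * fderiv ℝ (fun p : (Fin n → ℝ) × ℝ => h p.1 p.2) (u, x) (Pi.single k 1, 0))
        = ∫ u : Fin n → ℝ, c k * u k * (Real.exp (-Phi c u) * h u x) := by
    intro x k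
    have hpart : ContDiff ℝ (⊤ : ℕ∞) (fun v : Fin n → ℝ => h v x) :=
      (hh.of_le (by simp)).comp (contDiff_id.prodMk contDiff_const)
    have hF0c : ContDiff ℝ 1 (fun v : Fin n → ℝ => Real.exp (-Phi c v) * h v x) :=
      (hwc.mul hpart).of_le (by norm_num)
    have hF0s : HasCompactSupport (fun v : Fin n → ℝ => Real.exp (-Phi c v) * h v x) :=
      HasCompactSupport.intro hK (fun v hv => by rw [h0 v hv x, mul_zero])
    have hzero := integral_fderiv_apply_eq_zero hF0c hF0s (Pi.single k 1)
    have hfd : ∀ u, fderiv ℝ (fun v : Fin n → ℝ => Real.exp (-Phi c v) * h v x) u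
        (Pi.single k 1)
        = Real.exp (-Phi c u)
            * fderiv ℝ (fun p : (Fin n → ℝ) × ℝ => h p.1 p.2) (u, x) (Pi.single k 1, 0)
          - c k * u k * (Real.exp (-Phi c u) * h u x) := by
      intro u
      have hhD : HasFDerivAt (fun v : Fin n → ℝ => h v x)
          (fderiv ℝ (fun v : Fin n → ℝ => h v x) u) u :=
        (hasFDerivAt_partial_u hh u x).differentiableAt.hasFDerivAt
      have hm := (hwD u).fun_mul hhD
      rw [hm.fderiv]
      have hs := Phi_deriv_single c u k
      simp only [ContinuousLinearMap.add_apply, ContinuousLinearMap.neg_apply,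
        ContinuousLinearMap.smul_apply, smul_eq_mul]
      rw [hs, hD1eq k u x]
      ring
    have heq2 : (fun u : Fin n → ℝ => fderiv ℝ
          (fun v : Fin n → ℝ => Real.exp (-Phi c v) * h v x) u (Pi.single k 1))
        = fun u => Real.exp (-Phi c u)
            * fderiv ℝ (fun p : (Fin n → ℝ) × ℝ => h p.1 p.2) (u, x) (Pi.single k 1, 0)
          - c k * u k * (Real.exp (-Phi c u) * h u x) := funext hfd
    rw [heq2] at hzero
    have hIA : Integrable (fun u : Fin n → ℝ => Real.exp (-Phi c u)
        * fderiv ℝ (fun p : (Fin n → ℝ) × ℝ => h p.1 p.2) (u, x) (Pi.single k 1, 0)) := by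
      apply Continuous.integrable_of_hasCompactSupport
      · exact hwcont.mul ((hD1cont k).comp (continuous_id.prodMk continuous_const))
      · exact HasCompactSupport.intro hK (fun v hv => by rw [hD1van k v x hv, mul_zero])
    have hIB : Integrable (fun u : Fin n → ℝ =>
        c k * u k * (Real.exp (-Phi c u) * h u x)) := by
      apply Continuous.integrable_of_hasCompactSupport
      · exact (continuous_const.mul (continuous_apply k)).mul
          (hwcont.mul (hhcont.comp (continuous_id.prodMk continuous_const)))
      · exact HasCompactSupport.intro hK (fun v hv => by rw [h0 v hv x, mul_zero, mul_zero])
    rw [integral_sub hIA hIB] at hzero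
    linarith
  -- derivative of h in x
  have hψd : ∀ u, Differentiable ℝ (h u) :=
    fun u x => (hasDerivAt_partial_x hh u x).differentiableAt
  have hψ'c : ∀ u, Continuous (deriv (h u)) := by
    intro u
    have heq3 : deriv (h u) = fun x =>
        fderiv ℝ (fun p : (Fin n → ℝ) × ℝ => h p.1 p.2) (u, x) (0, 1) :=
      funext fun x => hD2eq u x
    rw [heq3]
    exact hD2cont.comp (continuous_const.prodMk continuous_id)
  -- integration by parts in x
  have hxI : ∀ u (k : Fin n), ∫ x in (0:ℝ)..T, deriv (e k) x * deriv (h u) x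
      = (((k.1 + 1 : ℕ) : ℝ) ^ 2 / L ^ 2) * ∫ x in (0:ℝ)..T, e k x * h u x :=
    fun u k => xIBP hL (e k) (he k) (hper k) _ (heig k) (h u) (hψd u) (hψ'c u) (hhper u)
  -- pointwise decomposition of the inner integral
  have claim1 : ∀ u : Fin n → ℝ, Real.exp (-Phi c u) * ∫ x in (0:ℝ)..T, Lhat a e h u x
      = ∑ k : Fin n, ((Real.exp (-Phi c u) * ∫ x in (0:ℝ)..T, e k x
            * fderiv ℝ (fun p : (Fin n → ℝ) × ℝ => h p.1 p.2) (u, x) (Pi.single k 1, 0))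
          - c k * u k * (Real.exp (-Phi c u) * ∫ x in (0:ℝ)..T, e k x * h u x)) := by
    intro u
    have hint1 : ∀ k : Fin n, IntervalIntegrable (fun x => e k x
        * fderiv ℝ (fun p : (Fin n → ℝ) × ℝ => h p.1 p.2) (u, x) (Pi.single k 1, 0))
        volume 0 T :=
      fun k => (((he k).continuous).mul
        ((hD1cont k).comp (continuous_const.prodMk continuous_id))).intervalIntegrable _ _
    have hint2 : ∀ k : Fin n, IntervalIntegrable
        (fun x => a k * u k * deriv (e k) x * deriv (h u) x) volume 0 T :=
      fun k => ((continuous_const.mul ((he k).continuous_deriv (by simp))).mul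
        (hψ'c u)).intervalIntegrable _ _
    have hLh : ∀ x, Lhat a e h u x = ∑ k : Fin n, (e k x
        * fderiv ℝ (fun p : (Fin n → ℝ) × ℝ => h p.1 p.2) (u, x) (Pi.single k 1, 0)
        - a k * u k * deriv (e k) x * deriv (h u) x) := by
      intro x
      unfold Lhat
      exact Finset.sum_congr rfl fun k _ => by rw [hD1eq k u x]
    rw [intervalIntegral.integral_congr (fun x _ => hLh x)]
    rw [intervalIntegral.integral_finset_sum (fun k _ => ((hint1 k).sub (hint2 k)))]
    rw [Finset.mul_sum]
    refine Finset.sum_congr rfl fun k _ => ?_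
    rw [intervalIntegral.integral_sub (hint1 k) (hint2 k)]
    have hc2 : (∫ x in (0:ℝ)..T, a k * u k * deriv (e k) x * deriv (h u) x)
        = a k * u k * ∫ x in (0:ℝ)..T, deriv (e k) x * deriv (h u) x := by
      rw [← intervalIntegral.integral_const_mul]
      exact intervalIntegral.integral_congr fun x _ => by ring
    rw [hc2, hxI u k]
    rw [← hclam k]
    ring
  -- integrability of the two summand families
  have hintA : ∀ k : Fin n, Integrable (fun u : Fin n → ℝ => Real.exp (-Phi c u)
      * ∫ x in (0:ℝ)..T, e k x
        * fderiv ℝ (fun p : (Fin n → ℝ) × ℝ => h p.1 p.2) (u, x) (Pi.single k 1, 0)) := by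
    intro k
    apply Continuous.integrable_of_hasCompactSupport
    · apply hwcont.mul
      apply intervalIntegral.continuous_parametric_intervalIntegral_of_continuous'
        (f := fun (u : Fin n → ℝ) x => e k x
          * fderiv ℝ (fun p : (Fin n → ℝ) × ℝ => h p.1 p.2) (u, x) (Pi.single k 1, 0))
      exact ((he k).continuous.comp continuous_snd).mul
        ((hD1cont k).comp (continuous_fst.prodMk continuous_snd))
    · refine HasCompactSupport.intro hK fun v hv => ?_
      have hz : (fun x => e k x
          * fderiv ℝ (fun p : (Fin n → ℝ) × ℝ => h p.1 p.2) (v, x) (Pi.single k 1, 0))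
          = fun _ => (0:ℝ) := funext fun x => by rw [hD1van k v x hv, mul_zero]
      rw [hz, intervalIntegral.integral_zero, mul_zero]
  have hintB : ∀ k : Fin n, Integrable (fun u : Fin n → ℝ =>
      c k * u k * (Real.exp (-Phi c u) * ∫ x in (0:ℝ)..T, e k x * h u x)) := by
    intro k
    apply Continuous.integrable_of_hasCompactSupport
    · apply (continuous_const.mul (continuous_apply k)).mul
      apply hwcont.mul
      apply intervalIntegral.continuous_parametric_intervalIntegral_of_continuous'
        (f := fun (u : Fin n → ℝ) x => e k x * h u x)
      exact ((he k).continuous.comp continuous_snd).mul hhcont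
    · refine HasCompactSupport.intro hK fun v hv => ?_
      have hz : (fun x => e k x * h v x) = fun _ => (0:ℝ) :=
        funext fun x => by rw [h0 v hv x, mul_zero]
      rw [hz, intervalIntegral.integral_zero, mul_zero, mul_zero]
  -- the two integrals agree (Fubini + integration by parts in u)
  have claim3 : ∀ k : Fin n, (∫ u : Fin n → ℝ, Real.exp (-Phi c u)
        * ∫ x in (0:ℝ)..T, e k x
          * fderiv ℝ (fun p : (Fin n → ℝ) × ℝ => h p.1 p.2) (u, x) (Pi.single k 1, 0))
      = ∫ u : Fin n → ℝ, c k * u k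
          * (Real.exp (-Phi c u) * ∫ x in (0:ℝ)..T, e k x * h u x) := by
    intro k
    have e1 : ∀ u : Fin n → ℝ, Real.exp (-Phi c u) * ∫ x in (0:ℝ)..T, e k x
        * fderiv ℝ (fun p : (Fin n → ℝ) × ℝ => h p.1 p.2) (u, x) (Pi.single k 1, 0)
        = ∫ x in Set.Ioc (0:ℝ) T, Real.exp (-Phi c u) * (e k x
          * fderiv ℝ (fun p : (Fin n → ℝ) × ℝ => h p.1 p.2) (u, x) (Pi.single k 1, 0)) := by
      intro u
      rw [← intervalIntegral.integral_const_mul, intervalIntegral.integral_of_le hT0]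
    have e2 : ∀ u : Fin n → ℝ, c k * u k
        * (Real.exp (-Phi c u) * ∫ x in (0:ℝ)..T, e k x * h u x)
        = ∫ x in Set.Ioc (0:ℝ) T, c k * u k * (Real.exp (-Phi c u) * (e k x * h u x)) := by
      intro u
      rw [← intervalIntegral.integral_const_mul, ← intervalIntegral.integral_const_mul,
        intervalIntegral.integral_of_le hT0]
    simp only [e1, e2]
    have hG1 : Integrable (Function.uncurry fun (u : Fin n → ℝ) (x : ℝ) =>
        Real.exp (-Phi c u) * (e k x
          * fderiv ℝ (fun p : (Fin n → ℝ) × ℝ => h p.1 p.2) (u, x) (Pi.single k 1, 0)))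
        (volume.prod (volume.restrict (Set.Ioc 0 T))) := by
      apply integrable_prod_helper _ hK _ T
      · exact (hwcont.comp continuous_fst).mul
          (((he k).continuous.comp continuous_snd).mul
            ((hD1cont k).comp (continuous_fst.prodMk continuous_snd)))
      · intro p hp
        simp only [Function.uncurry]
        rw [hD1van k p.1 p.2 hp, mul_zero, mul_zero]
    have hG2 : Integrable (Function.uncurry fun (u : Fin n → ℝ) (x : ℝ) =>
        c k * u k * (Real.exp (-Phi c u) * (e k x * h u x)))
        (volume.prod (volume.restrict (Set.Ioc 0 T))) := by
      apply integrable_prod_helper _ hK _ T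
      · exact ((continuous_const.mul ((continuous_apply k).comp continuous_fst)).mul
          ((hwcont.comp continuous_fst).mul
            (((he k).continuous.comp continuous_snd).mul hhcont)))
      · intro p hp
        simp only [Function.uncurry]
        rw [h0 p.1 hp p.2, mul_zero, mul_zero, mul_zero]
    rw [MeasureTheory.integral_integral_swap hG1, MeasureTheory.integral_integral_swap hG2]
    refine integral_congr_ae (Filter.Eventually.of_forall fun x => ?_)
    calc (∫ u : Fin n → ℝ, Real.exp (-Phi c u) * (e k x
          * fderiv ℝ (fun p : (Fin n → ℝ) × ℝ => h p.1 p.2) (u, x) (Pi.single k 1, 0)))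
        = ∫ u : Fin n → ℝ, e k x * (Real.exp (-Phi c u)
          * fderiv ℝ (fun p : (Fin n → ℝ) × ℝ => h p.1 p.2) (u, x) (Pi.single k 1, 0)) :=
          integral_congr_ae (Filter.Eventually.of_forall fun u => by ring)
      _ = e k x * ∫ u : Fin n → ℝ, Real.exp (-Phi c u)
          * fderiv ℝ (fun p : (Fin n → ℝ) × ℝ => h p.1 p.2) (u, x) (Pi.single k 1, 0) :=
          integral_const_mul _ _
      _ = e k x * ∫ u : Fin n → ℝ, c k * u k * (Real.exp (-Phi c u) * h u x) := by
          rw [hIBPu x k]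
      _ = ∫ u : Fin n → ℝ, c k * u k * (Real.exp (-Phi c u) * (e k x * h u x)) := by
          rw [← integral_const_mul]
          exact integral_congr_ae (Filter.Eventually.of_forall fun u => by ring)
  -- final assembly
  calc ∫ u : Fin n → ℝ, Real.exp (-Phi c u) * ∫ x in (0:ℝ)..T, Lhat a e h u x
      = ∫ u : Fin n → ℝ, ∑ k : Fin n, ((Real.exp (-Phi c u) * ∫ x in (0:ℝ)..T, e k x
            * fderiv ℝ (fun p : (Fin n → ℝ) × ℝ => h p.1 p.2) (u, x) (Pi.single k 1, 0))
          - c k * u k * (Real.exp (-Phi c u) * ∫ x in (0:ℝ)..T, e k x * h u x)) :=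
        integral_congr_ae (Filter.Eventually.of_forall claim1)
    _ = ∑ k : Fin n, ∫ u : Fin n → ℝ, ((Real.exp (-Phi c u) * ∫ x in (0:ℝ)..T, e k x
            * fderiv ℝ (fun p : (Fin n → ℝ) × ℝ => h p.1 p.2) (u, x) (Pi.single k 1, 0))
          - c k * u k * (Real.exp (-Phi c u) * ∫ x in (0:ℝ)..T, e k x * h u x)) :=
        integral_finset_sum _ (fun k _ => (hintA k).sub (hintB k))
    _ = ∑ k : Fin n, ((∫ u : Fin n → ℝ, Real.exp (-Phi c u) * ∫ x in (0:ℝ)..T, e k x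
            * fderiv ℝ (fun p : (Fin n → ℝ) × ℝ => h p.1 p.2) (u, x) (Pi.single k 1, 0))
          - ∫ u : Fin n → ℝ, c k * u k
            * (Real.exp (-Phi c u) * ∫ x in (0:ℝ)..T, e k x * h u x)) :=
        Finset.sum_congr rfl fun k _ => integral_sub (hintA k) (hintB k)
    _ = 0 := Finset.sum_eq_zero fun k _ => by rw [claim3 k]; ring


/-- On `ℝⁿ × (ℝ/2πLℤ)`, the operator `L̂` is antisymmetric in `L²(μ̂)` with
`μ̂ = μ ⊗ κ`, `μ` the Gaussian measure proportional to
`exp(−(1/(2L²))∑ a_k k² u_k²)` and `κ` the uniform probability measure on the circle. -/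
theorem stmt11 (L : ℝ) (hL : 0 < L) (n : ℕ) (a : Fin n → ℝ) (ha : ∀ k, 0 < a k)
    (e : Fin n → ℝ → ℝ) (he : ∀ k, ContDiff ℝ (⊤ : ℕ∞) (e k))
    (hper : ∀ k, Function.Periodic (e k) (2 * Real.pi * L))
    (heig : ∀ k : Fin n, deriv (deriv (e k))
      = fun x => -(((k.1 + 1 : ℕ) : ℝ) ^ 2 / L ^ 2) * e k x)
    (horth : ∀ j k, (∫ x in (0:ℝ)..(2 * Real.pi * L), e j x * e k x)
      = if j = k then 1 else 0)
    (f g : (Fin n → ℝ) → ℝ → ℝ)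
    (hf : ContDiff ℝ (⊤ : ℕ∞) (fun p : (Fin n → ℝ) × ℝ => f p.1 p.2))
    (hg : ContDiff ℝ (⊤ : ℕ∞) (fun p : (Fin n → ℝ) × ℝ => g p.1 p.2))
    (hfsupp : ∃ K : Set (Fin n → ℝ), IsCompact K ∧ ∀ u ∉ K, ∀ x, f u x = 0)
    (hgsupp : ∃ K : Set (Fin n → ℝ), IsCompact K ∧ ∀ u ∉ K, ∀ x, g u x = 0)
    (hfper : ∀ u, Function.Periodic (f u) (2 * Real.pi * L))
    (hgper : ∀ u, Function.Periodic (g u) (2 * Real.pi * L)) :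
    ∫ u, (∫ x in (0:ℝ)..(2 * Real.pi * L), f u x * Lhat a e g u x) / (2 * Real.pi * L)
        ∂gaussMeasure (fun k => a k * ((k.1 + 1 : ℕ) : ℝ) ^ 2 / L ^ 2)
      = - ∫ u, (∫ x in (0:ℝ)..(2 * Real.pi * L), Lhat a e f u x * g u x) / (2 * Real.pi * L)
          ∂gaussMeasure (fun k => a k * ((k.1 + 1 : ℕ) : ℝ) ^ 2 / L ^ 2) := by
  obtain ⟨Kf, hKf, hf0⟩ := hfsupp
  set T := 2 * Real.pi * L with hTdef
  set c : Fin n → ℝ := fun k => a k * ((k.1 + 1 : ℕ) : ℝ) ^ 2 / L ^ 2 with hcdef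
  have hwcont : Continuous (fun u : Fin n → ℝ => Real.exp (-Phi c u)) :=
    Real.continuous_exp.comp ((contDiff_Phi c).continuous.neg)
  have hLg := continuous_Lhat a e he hg
  have hLf := continuous_Lhat a e he hf
  have hI1cont : Continuous fun u : Fin n → ℝ =>
      ∫ x in (0:ℝ)..T, f u x * Lhat a e g u x := by
    apply intervalIntegral.continuous_parametric_intervalIntegral_of_continuous'
      (f := fun (u : Fin n → ℝ) x => f u x * Lhat a e g u x)
    exact hf.continuous.mul hLg
  have hI2cont : Continuous fun u : Fin n → ℝ =>
      ∫ x in (0:ℝ)..T, Lhat a e f u x * g u x := by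
    apply intervalIntegral.continuous_parametric_intervalIntegral_of_continuous'
      (f := fun (u : Fin n → ℝ) x => Lhat a e f u x * g u x)
    exact hLf.mul hg.continuous
  have intS1 : Integrable (fun u : Fin n → ℝ =>
      Real.exp (-Phi c u) * ∫ x in (0:ℝ)..T, f u x * Lhat a e g u x) := by
    apply Continuous.integrable_of_hasCompactSupport (hwcont.fun_mul hI1cont)
    refine HasCompactSupport.intro hKf fun v hv => ?_
    have hz : (fun x => f v x * Lhat a e g v x) = fun _ => (0:ℝ) :=
      funext fun x => by rw [hf0 v hv x, zero_mul]
    rw [hz, intervalIntegral.integral_zero, mul_zero]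
  have intS2 : Integrable (fun u : Fin n → ℝ =>
      Real.exp (-Phi c u) * ∫ x in (0:ℝ)..T, Lhat a e f u x * g u x) := by
    apply Continuous.integrable_of_hasCompactSupport (hwcont.fun_mul hI2cont)
    refine HasCompactSupport.intro hKf fun v hv => ?_
    have hz : (fun x => Lhat a e f v x * g v x) = fun _ => (0:ℝ) :=
      funext fun x => by rw [Lhat_vanish hKf.isClosed hf0 hv x, zero_mul]
    rw [hz, intervalIntegral.integral_zero, mul_zero]
  have hadd : (∫ u : Fin n → ℝ, Real.exp (-Phi c u)
        * ∫ x in (0:ℝ)..T, f u x * Lhat a e g u x)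
      + (∫ u : Fin n → ℝ, Real.exp (-Phi c u)
        * ∫ x in (0:ℝ)..T, Lhat a e f u x * g u x) = 0 := by
    rw [← integral_add intS1 intS2]
    have hptw : ∀ u : Fin n → ℝ,
        Real.exp (-Phi c u) * (∫ x in (0:ℝ)..T, f u x * Lhat a e g u x)
          + Real.exp (-Phi c u) * (∫ x in (0:ℝ)..T, Lhat a e f u x * g u x)
        = Real.exp (-Phi c u)
            * ∫ x in (0:ℝ)..T, Lhat a e (fun v y => f v y * g v y) u x := by
      intro u
      have hi1 : IntervalIntegrable (fun x => f u x * Lhat a e g u x) volume 0 T :=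
        ((hf.continuous.comp (continuous_const.prodMk continuous_id)).mul
          (hLg.comp (continuous_const.prodMk continuous_id))).intervalIntegrable _ _
      have hi2 : IntervalIntegrable (fun x => Lhat a e f u x * g u x) volume 0 T :=
        ((hLf.comp (continuous_const.prodMk continuous_id)).mul
          (hg.continuous.comp (continuous_const.prodMk continuous_id))).intervalIntegrable _ _
      rw [← mul_add, ← intervalIntegral.integral_add hi1 hi2]
      congr 1
      refine intervalIntegral.integral_congr fun x _ => ?_
      exact (Lhat_mul a e hf hg u x).symm
    rw [integral_congr_ae (Filter.Eventually.of_forall hptw)]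
    exact key L hL a e he hper heig _ (hf.mul hg) hKf
      (fun u hu x => by rw [hf0 u hu x, zero_mul])
      (fun u => (hfper u).mul (hgper u))
  -- unfold the Gaussian measure
  have hmeasdens : Measurable fun u : Fin n → ℝ => Real.toNNReal (Real.exp (-Phi c u)) :=
    (continuous_real_toNNReal.comp hwcont).measurable
  simp only [gaussMeasure]
  rw [integral_smul_measure, integral_smul_measure]
  rw [show (fun u : Fin n → ℝ => ENNReal.ofReal (Real.exp (-Phi c u)))
      = fun u => ((Real.toNNReal (Real.exp (-Phi c u)) : NNReal) : ENNReal) from rfl]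
  rw [integral_withDensity_eq_integral_smul hmeasdens,
    integral_withDensity_eq_integral_smul hmeasdens]
  have hcoe : ∀ u : Fin n → ℝ,
      ((Real.toNNReal (Real.exp (-Phi c u)) : NNReal) : ℝ) = Real.exp (-Phi c u) :=
    fun u => Real.coe_toNNReal _ (Real.exp_nonneg _)
  have hI1' : (∫ u : Fin n → ℝ, (Real.toNNReal (Real.exp (-Phi c u)))
        • ((∫ x in (0:ℝ)..T, f u x * Lhat a e g u x) / T))
      = (∫ u : Fin n → ℝ, Real.exp (-Phi c u)
        * ∫ x in (0:ℝ)..T, f u x * Lhat a e g u x) / T := by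
    rw [← integral_div]
    refine integral_congr_ae (Filter.Eventually.of_forall fun u => ?_)
    dsimp only
    rw [NNReal.smul_def, hcoe u, smul_eq_mul]
    ring
  have hI2' : (∫ u : Fin n → ℝ, (Real.toNNReal (Real.exp (-Phi c u)))
        • ((∫ x in (0:ℝ)..T, Lhat a e f u x * g u x) / T))
      = (∫ u : Fin n → ℝ, Real.exp (-Phi c u)
        * ∫ x in (0:ℝ)..T, Lhat a e f u x * g u x) / T := by
    rw [← integral_div]
    refine integral_congr_ae (Filter.Eventually.of_forall fun u => ?_)
    dsimp only
    rw [NNReal.smul_def, hcoe u, smul_eq_mul]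
    ring
  rw [hI1', hI2']
  have hS : (∫ u : Fin n → ℝ, Real.exp (-Phi c u)
        * ∫ x in (0:ℝ)..T, f u x * Lhat a e g u x)
      = -(∫ u : Fin n → ℝ, Real.exp (-Phi c u)
        * ∫ x in (0:ℝ)..T, Lhat a e f u x * g u x) := by linarith
  rw [hS, neg_div, smul_neg]
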